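/- arXiv:0712.0266 — 2 statements merged into one kernel-verified Lean document; each statement's English description precedes it below -/
import Mathlib

section
/- Let B be the closed unit ball of a finite-dimensional real normed space, let f : B → B be continuous, let 0 ≤ δ < 1 with ‖f(x) + x‖ ≤ δ for all x ∈ B, and let a ∈ B with ‖a‖ ≤ 1 − δ and a ∉ f(B). Define g : B → ∂B by g(x) = (f(x) − a)/‖f(x) − a‖. Then g has no fixed point. -/
open Metric

/-- Let `B` be the closed unit ball of a finite-dimensional real
normed space, `f : B → B` continuous, `0 ≤ δ < 1` with `‖f x + x‖ ≤ δ` on `B`,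
and `a ∈ B` with `‖a‖ ≤ 1 − δ` and `a ∉ f(B)`.  Then the map
`g(x) = (f x − a)/‖f x − a‖ : B → ∂B` has no fixed point. -/
theorem stmt_2 (V : Type*) [NormedAddCommGroup V] [NormedSpace ℝ V]
    [FiniteDimensional ℝ V]
    (f : V → V) (hf : ContinuousOn f (closedBall (0 : V) 1))
    (hmaps : ∀ x ∈ closedBall (0 : V) 1, f x ∈ closedBall (0 : V) 1)
    (δ : ℝ) (hδ0 : 0 ≤ δ) (hδ1 : δ < 1)
    (hfd : ∀ x ∈ closedBall (0 : V) 1, ‖f x + x‖ ≤ δ)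
    (a : V) (ha : a ∈ closedBall (0 : V) 1) (hanorm : ‖a‖ ≤ 1 - δ)
    (hna : a ∉ f '' closedBall (0 : V) 1) :
    ∀ x ∈ closedBall (0 : V) 1, ‖f x - a‖⁻¹ • (f x - a) ≠ x := by
  intro x hx h
  have hne : f x ≠ a := fun he => hna ⟨x, hx, he⟩
  have hc : (0 : ℝ) < ‖f x - a‖ := by
    rw [norm_pos_iff]; exact sub_ne_zero.mpr hne
  have heq : ‖f x - a‖ • x = f x - a := by
    have := congrArg (fun y => ‖f x - a‖ • y) h
    simpa [smul_smul, mul_inv_cancel₀ (ne_of_gt hc)] using this.symm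
  have hxnorm : ‖x‖ = 1 := by
    have := congrArg norm h
    rw [norm_smul, norm_inv, norm_norm, inv_mul_cancel₀ (ne_of_gt hc)] at this; exact this.symm
  have hfx : f x + x = a + (‖f x - a‖ + 1) • x := by
    rw [add_smul, one_smul, heq]; abel
  have hbound := hfd x hx
  rw [hfx] at hbound
  have : ‖(‖f x - a‖ + 1) • x‖ - ‖a‖ ≤ ‖a + (‖f x - a‖ + 1) • x‖ := by
    have := norm_sub_norm_le ((‖f x - a‖ + 1) • x) (-a)
    simpa [add_comm] using this
  rw [norm_smul, hxnorm, mul_one, Real.norm_of_nonneg (by positivity)] at this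
  linarith
end

section
/- The supremum over z ∈ ℂ of |z³ − 1/√8| / (1 + |z|²)² equals 1/√8. -/
open Real

/-- The gap is `s² (s - √2)²`. -/
lemma one_add_sqrt_eight_mul_pow_three_le (s : ℝ) : 1 + √8 * s ^ 3 ≤ (1 + s ^ 2) ^ 2 := by
  have hsqrt_eight : √8 = 2 * √2 := by
    rw [show (8 : ℝ) = 2 ^ 2 * 2 by norm_num, sqrt_mul (by norm_num), sqrt_sq (by norm_num)]
  have hsqrt_two : √2 ^ 2 = 2 := sq_sqrt (by norm_num)
  rw [hsqrt_eight]
  nlinarith [sq_nonneg (s * (s - √2))]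

lemma norm_pow_three_sub_inv_sqrt_eight_div_le (z : ℂ) :
    ‖z ^ 3 - (√8 : ℂ)⁻¹‖ / (1 + ‖z‖ ^ 2) ^ 2 ≤ 1 / √8 := by
  have hsqrt_pos : 0 < √8 := sqrt_pos.mpr (by norm_num)
  have hnorm : ‖z ^ 3 - (√8 : ℂ)⁻¹‖ ≤ ‖z‖ ^ 3 + (√8)⁻¹ := by
    calc ‖z ^ 3 - (√8 : ℂ)⁻¹‖ ≤ ‖z ^ 3‖ + ‖(√8 : ℂ)⁻¹‖ := norm_sub_le _ _
      _ = ‖z‖ ^ 3 + (√8)⁻¹ := by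
        rw [norm_pow, norm_inv, Complex.norm_real, norm_of_nonneg hsqrt_pos.le]
  rw [div_le_div_iff₀ (by positivity) hsqrt_pos, one_mul]
  calc ‖z ^ 3 - (√8 : ℂ)⁻¹‖ * √8 ≤ (‖z‖ ^ 3 + (√8)⁻¹) * √8 := by gcongr
    _ = 1 + √8 * ‖z‖ ^ 3 := by field_simp; ring
    _ ≤ (1 + ‖z‖ ^ 2) ^ 2 := one_add_sqrt_eight_mul_pow_three_le _

/-- The supremum over `z ∈ ℂ` of `|z³ − 1/√8| / (1 + |z|²)²`
equals `1/√8` (the bound holds for all `z` and is attained, e.g. at `z = 0`). -/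
theorem stmt_6 :
    IsGreatest
      {r : ℝ | ∃ z : ℂ,
        r = ‖z ^ 3 - (Real.sqrt 8 : ℂ)⁻¹‖ / (1 + ‖z‖ ^ 2) ^ 2}
      (1 / Real.sqrt 8) := by
  refine ⟨⟨0, ?_⟩, ?_⟩
  · simp [Complex.norm_real, abs_of_pos (sqrt_pos.mpr (by norm_num : (0 : ℝ) < 8))]
  · rintro r ⟨z, rfl⟩
    exact norm_pow_three_sub_inv_sqrt_eight_div_le z
end
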